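/- (Lemma on recovering weights by limits, Lemma 3) Let a fully-connected layered feed-forward network of depth L with one source and one sink have activation f(x) = e^x − 1 and weight family W ∈ W_o, with measured function F = F^L_1. Then for every l ∈ {1,…,L}, every i ∈ N^l and every j ∈ N^{l−1}, the function G^l_{ij}(x) is well defined for all sufficiently large x and satisfies lim_{x → +∞} G^l_{ij}(x) = w^l_{ij}. -/

import Mathlib

/-!
Write `F^l_i = exp S^l_i - 1` with `S^l_i = ∑_j w^l_{ij} F^{l-1}_j`. Positive weights make every
`F^l_i` tend to `+∞`, and the strict ordering of the weights makes `S^l_i - S^l_{i'} → +∞` for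
`i < i'`, so `F^l_{i'} = o(exp S^l_i)` and `F^l_{i'} = o(F^l_i)`. Going down from the sink, the
argument `E^l_i` of the outer logarithm in `G^l_{ij}` is `w^{l+1}_{1i} F^l_i`, plus terms of
smaller order, plus `log^{∘(L-l)} F - S^{l+1}_1`, which converges by the layer above; hence
`E^l_i / exp S^l_i` has a positive limit and `log E^l_i - S^l_i` converges. Subtracting the
first `j - 1` terms of `S^l_i` and dividing by `F^{l-1}_j → ∞`, which dominates the remaining
`F^{l-1}_{j'}`, leaves `w^l_{ij}`.
-/

open Finset Filter

/-- Node outputs of the fully-connected layered feed-forward network with activation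
`f x = e^x - 1` and layer sizes `n 0, …, n L`: `expOut n w 0 i x = x` (the source) and
`expOut n w (l+1) i x = exp (∑_{j < n l} w^{l+1}_{ij} · expOut n w l j x) - 1`, where
`w (l+1) i j` is the weight of the edge from node `j` of layer `l` to node `i` of layer
`l + 1` (nodes are numbered `0, …, n l - 1`; the "first" node of a layer is node `0`). -/
noncomputable def expOut (n : ℕ → ℕ) (w : ℕ → ℕ → ℕ → ℝ) : ℕ → ℕ → ℝ → ℝ
  | 0, _, x => x
  | l + 1, i, x =>
      Real.exp (∑ j ∈ Finset.range (n l), w (l + 1) i j * expOut n w l j x) - 1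

/-- The class `W_o` of weight families: all weights are positive and, in each layer and for
each source node `j`, the weights are strictly decreasing in the destination node index
(`w^l_{1j} > w^l_{2j} > … > w^l_{n_l j}` in 1-based notation). -/
def Wo (L : ℕ) (n : ℕ → ℕ) (w : ℕ → ℕ → ℕ → ℝ) : Prop :=
  (∀ l < L, ∀ i < n (l + 1), ∀ j < n l, 0 < w (l + 1) i j) ∧
  (∀ l < L, ∀ j < n l, ∀ i i' : ℕ, i < i' → i' < n (l + 1) → w (l + 1) i' j < w (l + 1) i j)

open Real Topology

section Asymptotics

variable {α ι : Type*} {f : Filter α}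

lemma tendsto_sum_mul_atTop {s : Finset ι} (hs : s.Nonempty) {c : ι → ℝ} {g : ι → α → ℝ}
    (hc : ∀ j ∈ s, 0 < c j) (hg : ∀ j ∈ s, Tendsto (g j) f atTop) :
    Tendsto (fun x => ∑ j ∈ s, c j * g j x) f atTop := by
  obtain ⟨j₀, hj₀⟩ := hs
  refine tendsto_atTop_mono' f ?_ ((hg j₀ hj₀).const_mul_atTop (hc j₀ hj₀))
  filter_upwards [(eventually_all_finset s).2 fun j hj => (hg j hj).eventually_ge_atTop 0]
    with x hx
  exact single_le_sum (fun j hj => mul_nonneg (hc j hj).le (hx j hj)) hj₀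

lemma tendsto_log_sub_of_tendsto_div_exp {G S : α → ℝ} {a : ℝ} (ha : 0 < a)
    (h : Tendsto (fun x => G x / exp (S x)) f (𝓝 a)) :
    (∀ᶠ x in f, 0 < G x) ∧ Tendsto (fun x => log (G x) - S x) f (𝓝 (log a)) := by
  have hG : ∀ᶠ x in f, 0 < G x :=
    (h.eventually (eventually_gt_nhds ha)).mono fun x hx =>
      (div_pos_iff_of_pos_right (exp_pos _)).1 hx
  refine ⟨hG, ((continuousAt_log ha.ne').tendsto.comp h).congr' (hG.mono fun x hx => ?_)⟩
  simp only [Function.comp_apply, log_div hx.ne' (exp_ne_zero _), log_exp]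

lemma tendsto_sum_Ico_mul_div {m i : ℕ} (hi : i < m) {c : ℕ → ℝ} {F : ℕ → α → ℝ}
    {g : α → ℝ} (hself : Tendsto (fun x => F i x / g x) f (𝓝 1))
    (hlt : ∀ i', i < i' → i' < m → Tendsto (fun x => F i' x / g x) f (𝓝 0)) :
    Tendsto (fun x => ∑ i' ∈ Ico i m, c i' * F i' x / g x) f (𝓝 (c i)) := by
  have htail : Tendsto (fun x => ∑ i' ∈ Ico (i + 1) m, c i' * (F i' x / g x)) f (𝓝 0) := by
    simpa using tendsto_finsetSum _ fun i' hi' =>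
      (hlt i' (mem_Ico.1 hi').1 (mem_Ico.1 hi').2).const_mul (c i')
  have hlim := (hself.const_mul (c i)).add htail
  rw [mul_one, add_zero] at hlim
  refine hlim.congr fun x => ?_
  simp only [sum_eq_sum_Ico_succ_bot hi, mul_div_assoc]

end Asymptotics

noncomputable def netInput (n : ℕ → ℕ) (w : ℕ → ℕ → ℕ → ℝ) (k i : ℕ) (x : ℝ) : ℝ :=
  ∑ j ∈ range (n k), w (k + 1) i j * expOut n w k j x

lemma expOut_succ (n : ℕ → ℕ) (w : ℕ → ℕ → ℕ → ℝ) (k i : ℕ) (x : ℝ) :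
    expOut n w (k + 1) i x = exp (netInput n w k i x) - 1 :=
  rfl

/-- The argument of the outer logarithm in `G^l_{ij}`. -/
noncomputable def logArg (n : ℕ → ℕ) (w : ℕ → ℕ → ℕ → ℝ) (L l i : ℕ) (x : ℝ) : ℝ :=
  log^[L - l] (expOut n w L 0 x) - ∑ i' ∈ range i, w (l + 1) 0 i' * expOut n w l i' x

lemma logArg_eq (n : ℕ → ℕ) (w : ℕ → ℕ → ℕ → ℝ) {L l i : ℕ} (hl : l < L) (hi : i ≤ n l)
    (x : ℝ) :
    logArg n w L l i x = (log (logArg n w L (l + 1) 0 x) - netInput n w l 0 x) +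
      ∑ i' ∈ Ico i (n l), w (l + 1) 0 i' * expOut n w l i' x := by
  have hL : L - l = L - (l + 1) + 1 := by omega
  simp only [logArg, netInput, hL, Function.iterate_succ_apply', range_zero, sum_empty,
    sub_zero, ← sum_range_add_sum_Ico _ hi]
  ring

section Network

variable {L : ℕ} {n : ℕ → ℕ} {w : ℕ → ℕ → ℕ → ℝ}

theorem tendsto_expOut (hpos : ∀ l ≤ L, 0 < n l) (hw : Wo L n w) :
    ∀ l ≤ L, ∀ i < n l, Tendsto (expOut n w l i) atTop atTop
  | 0, _, _, _ => tendsto_id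
  | l + 1, hl, i, hi => by
    have hS : Tendsto (netInput n w l i) atTop atTop :=
      tendsto_sum_mul_atTop ⟨0, mem_range.2 (hpos l (by omega))⟩
        (fun j hj => hw.1 l hl i hi j (mem_range.1 hj))
        (fun j hj => tendsto_expOut hpos hw l (by omega) j (mem_range.1 hj))
    exact tendsto_atTop_add_const_right _ (-1) (tendsto_exp_atTop.comp hS)

lemma tendsto_sum_mul_expOut (hpos : ∀ l ≤ L, 0 < n l) (hw : Wo L n w) {k : ℕ} (hk : k ≤ L)
    {c : ℕ → ℝ} (hc : ∀ j < n k, 0 < c j) :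
    Tendsto (fun x => ∑ j ∈ range (n k), c j * expOut n w k j x) atTop atTop :=
  tendsto_sum_mul_atTop ⟨0, mem_range.2 (hpos k hk)⟩ (fun j hj => hc j (mem_range.1 hj))
    fun j hj => tendsto_expOut hpos hw k hk j (mem_range.1 hj)

lemma tendsto_netInput (hpos : ∀ l ≤ L, 0 < n l) (hw : Wo L n w) {k i : ℕ} (hk : k < L)
    (hi : i < n (k + 1)) : Tendsto (netInput n w k i) atTop atTop :=
  tendsto_sum_mul_expOut hpos hw hk.le fun j hj => hw.1 k hk i hi j hj

lemma tendsto_netInput_sub (hpos : ∀ l ≤ L, 0 < n l) (hw : Wo L n w) {k i i' : ℕ} (hk : k < L)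
    (hii' : i < i') (hi' : i' < n (k + 1)) :
    Tendsto (fun x => netInput n w k i x - netInput n w k i' x) atTop atTop := by
  refine (tendsto_sum_mul_expOut hpos hw hk.le fun j hj =>
    sub_pos.2 (hw.2 k hk j hj i i' hii' hi')).congr fun x => ?_
  simp only [netInput, sub_mul, sum_sub_distrib]

lemma tendsto_expOut_div_exp_netInput_self (hpos : ∀ l ≤ L, 0 < n l) (hw : Wo L n w)
    {k i : ℕ} (hk : k < L) (hi : i < n (k + 1)) :
    Tendsto (fun x => expOut n w (k + 1) i x / exp (netInput n w k i x)) atTop (𝓝 1) := by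
  have hlim := (tendsto_inv_atTop_zero.comp
    (tendsto_exp_atTop.comp (tendsto_netInput hpos hw hk hi))).const_sub 1
  rw [sub_zero] at hlim
  refine hlim.congr fun x => ?_
  simp [expOut_succ, sub_div]

lemma tendsto_expOut_div_exp_netInput_of_lt (hpos : ∀ l ≤ L, 0 < n l) (hw : Wo L n w)
    {k i i' : ℕ} (hk : k < L) (hii' : i < i') (hi' : i' < n (k + 1)) :
    Tendsto (fun x => expOut n w (k + 1) i' x / exp (netInput n w k i x)) atTop (𝓝 0) := by
  have hgap : Tendsto (fun x => exp (netInput n w k i' x - netInput n w k i x)) atTop (𝓝 0) :=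
    tendsto_exp_atBot.comp <| (tendsto_neg_atTop_atBot.comp
      (tendsto_netInput_sub hpos hw hk hii' hi')).congr fun x => neg_sub _ _
  refine squeeze_zero' ?_ ?_ hgap
  · filter_upwards [(tendsto_expOut hpos hw (k + 1) hk i' hi').eventually_ge_atTop 0] with x hx
    exact div_nonneg hx (exp_pos _).le
  · filter_upwards with x
    rw [exp_sub, expOut_succ]
    gcongr
    linarith

lemma tendsto_expOut_div_expOut_of_lt (hn0 : n 0 = 1) (hpos : ∀ l ≤ L, 0 < n l)
    (hw : Wo L n w) {l j j' : ℕ} (hl : l ≤ L) (hjj' : j < j') (hj' : j' < n l) :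
    Tendsto (fun x => expOut n w l j' x / expOut n w l j x) atTop (𝓝 0) := by
  obtain ⟨k, rfl⟩ : ∃ k, l = k + 1 := by
    rcases l with _ | k
    · omega
    · exact ⟨k, rfl⟩
  have hlim := (tendsto_expOut_div_exp_netInput_of_lt hpos hw hl hjj' hj').div
    (tendsto_expOut_div_exp_netInput_self hpos hw hl (hjj'.trans hj')) one_ne_zero
  rw [zero_div] at hlim
  exact hlim.congr fun x => div_div_div_cancel_right₀ (exp_ne_zero _) _ _

theorem exists_tendsto_logArg_div_exp (hnL : n L = 1) (hpos : ∀ l ≤ L, 0 < n l)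
    (hw : Wo L n w) {k : ℕ} (hk : k < L) :
    ∀ i < n (k + 1), ∃ a > 0,
      Tendsto (fun x => logArg n w L (k + 1) i x / exp (netInput n w k i x)) atTop (𝓝 a) := by
  obtain ⟨d, hd⟩ : ∃ d, L = k + 1 + d := ⟨L - (k + 1), by omega⟩
  induction d generalizing k with
  | zero =>
    rw [add_zero] at hd
    subst hd
    intro i hi
    obtain rfl : i = 0 := by omega
    refine ⟨1, one_pos, ?_⟩
    simpa [logArg] using tendsto_expOut_div_exp_netInput_self hpos hw hk hi
  | succ d ih =>
    intro i hi
    obtain ⟨b, hb, hlim⟩ := ih (k := k + 1) (by omega) (by omega) 0 (hpos _ (by omega))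
    have htail := (tendsto_log_sub_of_tendsto_div_exp hb hlim).2.div_atTop
      (tendsto_exp_atTop.comp (tendsto_netInput hpos hw hk hi))
    have hsum := tendsto_sum_Ico_mul_div (c := w (k + 1 + 1) 0) hi
      (tendsto_expOut_div_exp_netInput_self hpos hw hk hi)
      fun i' hii' hi' => tendsto_expOut_div_exp_netInput_of_lt hpos hw hk hii' hi'
    refine ⟨_, hw.1 (k + 1) (by omega) 0 (hpos _ (by omega)) i hi, ?_⟩
    refine (zero_add (w (k + 1 + 1) 0 i) ▸ htail.add hsum).congr fun x => ?_
    rw [logArg_eq n w (by omega) hi.le, add_div, sum_div]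
    rfl

end Network

theorem stmt_13_general (L : ℕ) (n : ℕ → ℕ) (hn0 : n 0 = 1) (hnL : n L = 1)
    (hpos : ∀ l ≤ L, 0 < n l) (w : ℕ → ℕ → ℕ → ℝ) (hw : Wo L n w)
    (l : ℕ) (hl1 : 1 ≤ l) (hlL : l ≤ L)
    (i : ℕ) (hi : i < n l) (j : ℕ) (hj : j < n (l - 1)) :
    (∀ᶠ x in atTop,
      expOut n w (l - 1) j x ≠ 0 ∧
        0 < Real.log^[L - l] (expOut n w L 0 x) -
            ∑ i' ∈ Finset.range i, w (l + 1) 0 i' * expOut n w l i' x) ∧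
    Tendsto
      (fun x =>
        (Real.log (Real.log^[L - l] (expOut n w L 0 x) -
            ∑ i' ∈ Finset.range i, w (l + 1) 0 i' * expOut n w l i' x) -
          ∑ j' ∈ Finset.range j, w l i j' * expOut n w (l - 1) j' x) /
        expOut n w (l - 1) j x)
      atTop (nhds (w l i j)) := by
  obtain ⟨k, rfl⟩ : ∃ k, l = k + 1 := ⟨l - 1, by omega⟩
  rw [Nat.add_sub_cancel] at hj ⊢
  have hk : k < L := by omega
  obtain ⟨a, ha, hlim⟩ := exists_tendsto_logArg_div_exp hnL hpos hw hk i hi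
  obtain ⟨hlogArg_pos, hlog⟩ := tendsto_log_sub_of_tendsto_div_exp ha hlim
  have hFj := tendsto_expOut hpos hw k hk.le j hj
  refine ⟨((hFj.eventually_gt_atTop 0).and hlogArg_pos).mono fun x hx => ⟨hx.1.ne', hx.2⟩, ?_⟩
  have hself : Tendsto (fun x => expOut n w k j x / expOut n w k j x) atTop (𝓝 1) :=
    tendsto_const_nhds.congr' <| (hFj.eventually_gt_atTop 0).mono fun x hx =>
      (div_self hx.ne').symm
  have hsum := tendsto_sum_Ico_mul_div (c := w (k + 1) i) hj hself
    fun j' hjj' hj' => tendsto_expOut_div_expOut_of_lt hn0 hpos hw hk.le hjj' hj'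
  refine (zero_add (w (k + 1) i j) ▸ (hlog.div_atTop hFj).add hsum).congr fun x => ?_
  rw [← sum_div, ← add_div, logArg, netInput, ← sum_range_add_sum_Ico _ hj.le]
  congr 1
  ring

/-- **(Lemma 3, lemma2: recovering weights by limits).** For a fully-connected layered
feed-forward network of depth `L ≥ 1` with one source and one sink, activation
`f x = e^x - 1`, weight family `W ∈ W_o` and measured function `F = expOut n w L 0`, for
every layer `l ∈ {1, …, L}`, node `i` of layer `l` and node `j` of layer `l - 1`, the
quantity
`G^l_{ij} (x) = (log (log^{∘(L-l)} (F x) - ∑_{i' < i} w^{l+1}_{1 i'} F^l_{i'} (x))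
  - ∑_{j' < j} w^l_{i j'} F^{l-1}_{j'} (x)) / F^{l-1}_j (x)`
is well defined for all sufficiently large `x` (the denominator is nonzero and the argument
of the outer logarithm is positive) and tends to `w^l_{ij}` as `x → +∞`. -/
theorem stmt_13 (L : ℕ) (hL : 1 ≤ L) (n : ℕ → ℕ) (hn0 : n 0 = 1) (hnL : n L = 1)
    (hpos : ∀ l ≤ L, 0 < n l) (w : ℕ → ℕ → ℕ → ℝ) (hw : Wo L n w)
    (l : ℕ) (hl1 : 1 ≤ l) (hlL : l ≤ L)
    (i : ℕ) (hi : i < n l) (j : ℕ) (hj : j < n (l - 1)) :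
    (∀ᶠ x in atTop,
      expOut n w (l - 1) j x ≠ 0 ∧
        0 < Real.log^[L - l] (expOut n w L 0 x) -
            ∑ i' ∈ Finset.range i, w (l + 1) 0 i' * expOut n w l i' x) ∧
    Tendsto
      (fun x =>
        (Real.log (Real.log^[L - l] (expOut n w L 0 x) -
            ∑ i' ∈ Finset.range i, w (l + 1) 0 i' * expOut n w l i' x) -
          ∑ j' ∈ Finset.range j, w l i j' * expOut n w (l - 1) j' x) /
        expOut n w (l - 1) j x)
      atTop (nhds (w l i j)) :=
  stmt_13_general L n hn0 hnL hpos w hw l hl1 hlL i hi j hj
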